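/- arXiv:2303.06134 — 2 statements merged into one kernel-verified Lean document; each statement's English description precedes it below -/
import Mathlib

section
/- Let c = (1 + √5)/2 and let J ⊂ ℝ³ be the 20 vertices of the dodecahedron: J = { (0, ±1/c, ±c), (±1/c, ±c, 0), (±c, 0, ±1/c), (±1, ±1, ±1) } (all sign choices). Then for every u ∈ ℝ³ and every symmetric 3×3 real matrix A: (i) Σ_{η ∈ J} ⟨u, η⟩² = 20·|u|²; (ii) Σ_{η ∈ J} ⟨u, η⟩² ⟨A η, η⟩ = 24·⟨A u, u⟩ + 12·tr(A)·|u|². In particular, for unit u the ratio (ii)/(i) equals (12/20)·(2⟨Au,u⟩ + tr(A)), so J is a 4-averaging set in ℝ³. -/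
/-!
The vertex set of the dodecahedron has isotropic second and fourth moment tensors:
`∑ η_a η_b = 20 δ_ab` and `∑ η_a η_b η_c η_d = 12 (δ_ab δ_cd + δ_ac δ_bd + δ_ad δ_bc)`.
Contracting these with `u ⊗ u` and with `u ⊗ u ⊗ A` gives both identities. The golden ratio
enters only through `c - c⁻¹ = 1`, whence `c² + c⁻² = 3` and `c⁴ + c⁻⁴ = 7`; the latter makes
`∑ η_a⁴ = 36` exactly three times `∑ η_a² η_b² = 12`, which is what isotropy of the fourth
moment requires.
-/

open Matrix Real goldenRatio

section Moments

variable {ι n : Type*} [Fintype ι] [Fintype n]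

theorem sq_dotProduct_eq_sum (u v : n → ℝ) :
    (u ⬝ᵥ v) ^ 2 = ∑ a, ∑ b, u a * u b * (v a * v b) := by
  rw [sq, dotProduct, Finset.sum_mul_sum]
  exact Finset.sum_congr rfl fun _ _ => Finset.sum_congr rfl fun _ _ => by ring

theorem mulVec_dotProduct_eq_sum (A : Matrix n n ℝ) (v : n → ℝ) :
    A *ᵥ v ⬝ᵥ v = ∑ c, ∑ d, A c d * (v c * v d) := by
  simp only [dotProduct, mulVec, Finset.sum_mul]
  exact Finset.sum_congr rfl fun _ _ => Finset.sum_congr rfl fun _ _ => by ring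

theorem sq_dotProduct_mul_mulVec_dotProduct_eq_sum (u v : n → ℝ) (A : Matrix n n ℝ) :
    (u ⬝ᵥ v) ^ 2 * (A *ᵥ v ⬝ᵥ v) =
      ∑ a, ∑ b, ∑ c, ∑ d, u a * u b * A c d * (v a * v b * v c * v d) := by
  rw [sq_dotProduct_eq_sum, mulVec_dotProduct_eq_sum]
  simp only [Finset.sum_mul]
  simp only [Finset.mul_sum]
  exact Finset.sum_congr rfl fun _ _ => Finset.sum_congr rfl fun _ _ =>
    Finset.sum_congr rfl fun _ _ => Finset.sum_congr rfl fun _ _ => by ring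

variable [DecidableEq n]

theorem sum_sq_dotProduct_eq_of_secondMoment (η : ι → n → ℝ) (s : ℝ)
    (h : ∀ a b, ∑ t, η t a * η t b = if a = b then s else 0) (u : n → ℝ) :
    ∑ t, (u ⬝ᵥ η t) ^ 2 = s * (u ⬝ᵥ u) := by
  calc ∑ t, (u ⬝ᵥ η t) ^ 2 = ∑ a, ∑ b, u a * u b * ∑ t, η t a * η t b := by
        simp only [sq_dotProduct_eq_sum, Finset.mul_sum,
          Finset.sum_comm (s := (Finset.univ : Finset ι))]
    _ = s * (u ⬝ᵥ u) := by simp [h, dotProduct, Finset.mul_sum, mul_comm]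

theorem sum_sq_dotProduct_mul_eq_of_fourthMoment (η : ι → n → ℝ) (m : ℝ)
    (h : ∀ a b c d, ∑ t, η t a * η t b * η t c * η t d =
      m * ((if a = b ∧ c = d then 1 else 0) + (if a = c ∧ b = d then 1 else 0) +
        (if a = d ∧ b = c then 1 else 0)))
    (u : n → ℝ) (A : Matrix n n ℝ) (hA : A.IsSymm) :
    ∑ t, (u ⬝ᵥ η t) ^ 2 * (A *ᵥ η t ⬝ᵥ η t) = m * (2 * (A *ᵥ u ⬝ᵥ u) + A.trace * (u ⬝ᵥ u)) := by
  have hdiag : ∑ a, ∑ c, u a * u a * A c c * m = m * (A.trace * (u ⬝ᵥ u)) := by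
    simp only [trace, diag, dotProduct, Finset.sum_mul, Finset.mul_sum]
    exact Finset.sum_congr rfl fun _ _ => Finset.sum_congr rfl fun _ _ => by ring
  have hquad (B : Matrix n n ℝ) : ∑ a, ∑ b, u a * u b * B a b * m = m * (B *ᵥ u ⬝ᵥ u) := by
    simp only [mulVec_dotProduct_eq_sum, Finset.mul_sum]
    exact Finset.sum_congr rfl fun _ _ => Finset.sum_congr rfl fun _ _ => by ring
  have hquadT : ∑ a, ∑ b, u a * u b * A b a * m = m * (A *ᵥ u ⬝ᵥ u) := by
    simpa only [transpose_apply, hA.eq] using hquad Aᵀ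
  calc ∑ t, (u ⬝ᵥ η t) ^ 2 * (A *ᵥ η t ⬝ᵥ η t)
        = ∑ a, ∑ b, ∑ c, ∑ d, u a * u b * A c d * ∑ t, η t a * η t b * η t c * η t d := by
        simp only [sq_dotProduct_mul_mulVec_dotProduct_eq_sum, Finset.mul_sum,
          Finset.sum_comm (s := (Finset.univ : Finset ι))]
    _ = m * (2 * (A *ᵥ u ⬝ᵥ u) + A.trace * (u ⬝ᵥ u)) := by
        simp only [h, ite_and, mul_add, mul_ite, mul_one, mul_zero, Finset.sum_add_distrib,
          Finset.sum_ite_irrel, Finset.sum_ite_eq, Finset.mem_univ, if_true, Finset.sum_const_zero]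
        rw [hdiag, hquad, hquadT]
        ring

end Moments

section Dodecahedron

noncomputable def dodecahedron (c : ℝ) : Fin 20 → Fin 3 → ℝ :=
  ![![0, c⁻¹, c], ![0, c⁻¹, -c], ![0, -c⁻¹, c], ![0, -c⁻¹, -c],
    ![c⁻¹, c, 0], ![c⁻¹, -c, 0], ![-c⁻¹, c, 0], ![-c⁻¹, -c, 0],
    ![c, 0, c⁻¹], ![c, 0, -c⁻¹], ![-c, 0, c⁻¹], ![-c, 0, -c⁻¹],
    ![1, 1, 1], ![1, 1, -1], ![1, -1, 1], ![1, -1, -1],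
    ![-1, 1, 1], ![-1, 1, -1], ![-1, -1, 1], ![-1, -1, -1]]

theorem goldenRatio_sub_inv : φ - φ⁻¹ = 1 := by
  rw [inv_goldenRatio, sub_neg_eq_add, goldenRatio_add_goldenConj]

variable {c : ℝ} (hc : c - c⁻¹ = 1)
include hc

theorem mul_inv_cancel_of_sub_inv_eq_one : c * c⁻¹ = 1 := by
  refine mul_inv_cancel₀ fun h => ?_
  simp [h] at hc

theorem sq_add_inv_sq_of_sub_inv_eq_one : c ^ 2 + c⁻¹ ^ 2 = 3 := by
  linear_combination (c - c⁻¹ + 1) * hc + 2 * mul_inv_cancel_of_sub_inv_eq_one hc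

theorem pow_four_add_inv_pow_four_of_sub_inv_eq_one : c ^ 4 + c⁻¹ ^ 4 = 7 := by
  linear_combination (c ^ 2 + c⁻¹ ^ 2 + 3) * sq_add_inv_sq_of_sub_inv_eq_one hc -
    2 * (c * c⁻¹ + 1) * mul_inv_cancel_of_sub_inv_eq_one hc

theorem dodecahedron_secondMoment (i j : Fin 3) :
    ∑ t, dodecahedron c t i * dodecahedron c t j = if i = j then 20 else 0 := by
  have h2 := sq_add_inv_sq_of_sub_inv_eq_one hc
  simp only [Fin.sum_univ_succ, Fin.sum_univ_zero, dodecahedron, cons_val_zero, cons_val_succ]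
  fin_cases i <;> fin_cases j <;> simp <;> linear_combination 4 * h2

theorem dodecahedron_fourthMoment (i j k l : Fin 3) :
    ∑ t, dodecahedron c t i * dodecahedron c t j * dodecahedron c t k * dodecahedron c t l =
      12 * ((if i = j ∧ k = l then 1 else 0) + (if i = k ∧ j = l then 1 else 0) +
        (if i = l ∧ j = k then 1 else 0)) := by
  have h4 := pow_four_add_inv_pow_four_of_sub_inv_eq_one hc
  have hmix : c ^ 2 * c⁻¹ ^ 2 = 1 := by
    rw [← mul_pow, mul_inv_cancel_of_sub_inv_eq_one hc, one_pow]
  simp only [Fin.sum_univ_succ, Fin.sum_univ_zero, dodecahedron, cons_val_zero, cons_val_succ]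
  -- Otherwise `ring` rewrites `c ^ 2 * c⁻¹ ^ 2` to `c * c⁻¹`, which `hmix` no longer matches.
  generalize c⁻¹ = d at *
  fin_cases i <;> fin_cases j <;> fin_cases k <;> fin_cases l <;> simp <;>
    first | ring1 | linear_combination 4 * h4 | linear_combination 4 * hmix

end Dodecahedron

/-- The 20 vertices of the dodecahedron form a 4-averaging set in `ℝ³`: for any `u` and
symmetric `A`, `∑ ⟨u,η⟩² = 20|u|²`, `∑ ⟨u,η⟩²⟨Aη,η⟩ = 24⟨Au,u⟩ + 12 tr(A) |u|²`, and for
unit `u` the ratio equals `(12/20)(2⟨Au,u⟩ + tr A)`. Here `c` is the golden ratio. -/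
theorem dodecahedron_four_averaging (c : ℝ) (hc : c = (1 + Real.sqrt 5) / 2)
    (η : Fin 20 → Fin 3 → ℝ)
    (hη : η = ![![0, c⁻¹, c], ![0, c⁻¹, -c], ![0, -c⁻¹, c], ![0, -c⁻¹, -c],
                ![c⁻¹, c, 0], ![c⁻¹, -c, 0], ![-c⁻¹, c, 0], ![-c⁻¹, -c, 0],
                ![c, 0, c⁻¹], ![c, 0, -c⁻¹], ![-c, 0, c⁻¹], ![-c, 0, -c⁻¹],
                ![1, 1, 1], ![1, 1, -1], ![1, -1, 1], ![1, -1, -1],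
                ![-1, 1, 1], ![-1, 1, -1], ![-1, -1, 1], ![-1, -1, -1]])
    (u : Fin 3 → ℝ)
    (A : Matrix (Fin 3) (Fin 3) ℝ) (hA : A.IsSymm) :
    (∑ j : Fin 20, (u ⬝ᵥ η j) ^ 2 = 20 * (u ⬝ᵥ u)) ∧
    (∑ j : Fin 20, (u ⬝ᵥ η j) ^ 2 * (A.mulVec (η j) ⬝ᵥ η j)
      = 24 * (A.mulVec u ⬝ᵥ u) + 12 * Matrix.trace A * (u ⬝ᵥ u)) ∧
    (u ⬝ᵥ u = 1 →
      (∑ j : Fin 20, (u ⬝ᵥ η j) ^ 2 * (A.mulVec (η j) ⬝ᵥ η j)) /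
          (∑ j : Fin 20, (u ⬝ᵥ η j) ^ 2)
        = (12 / 20) * (2 * (A.mulVec u ⬝ᵥ u) + Matrix.trace A)) := by
  obtain rfl : c = φ := hc
  obtain rfl : η = dodecahedron φ := hη
  have hsq := sum_sq_dotProduct_eq_of_secondMoment _ 20
    (dodecahedron_secondMoment goldenRatio_sub_inv) u
  have hquart := sum_sq_dotProduct_mul_eq_of_fourthMoment _ 12
    (dodecahedron_fourthMoment goldenRatio_sub_inv) u A hA
  refine ⟨hsq, by rw [hquart]; ring, fun hu => ?_⟩
  rw [hsq, hquart, hu]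
  ring
end

section
/- Let c = (1 + √5)/2 and let J ⊂ ℝ⁴ be the 600 vertices of the 120-cell: all permutations of (±2, ±2, 0, 0), of (±√5, ±1, ±1, ±1), of (±c, ±c, ±c, ±c⁻²), and of (±c², ±c⁻¹, ±c⁻¹, ±c⁻¹), together with all even permutations of (±c², ±c⁻², ±1, 0), of (±√5, ±c⁻¹, ±c, 0), and of (±2, ±1, ±c, ±c⁻¹) (all sign choices). Then for every u ∈ ℝ⁴ and every symmetric 4×4 real matrix A: (i) Σ_{η ∈ J} ⟨u, η⟩² = 1200·|u|²; (ii) Σ_{η ∈ J} ⟨u, η⟩² ⟨A η, η⟩ = 3200·⟨A u, u⟩ + 1600·tr(A)·|u|². In particular, for unit u the ratio (ii)/(i) equals (16/3)·( (2/4)⟨Au,u⟩ + (1/4)tr(A) ), so J is a 4-averaging set in ℝ⁴. -/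
/-!
The vertex set is the union of seven orbits of the group of signed permutations of the
coordinates (all permutations for the first four base vectors, the even ones for the last three).
The sum of a function over an orbit is its sum over the group divided by the order of the
stabilizer. Averaging over the 16 sign changes kills every monomial with an odd exponent, and
averaging over permutations then only depends on how many permutations send a given index (or a
given pair of indices) to a given position; `S₄` and `A₄` both do this uniformly. Each orbit thus
contributes a combination of `|u|²`, `tr A`, `⟨Au,u⟩` and `∑ uᵢ² Aᵢᵢ` whose coefficients
depend on the base vector `w` only through `∑ wᵢ²` (which is `8` for all seven) and `∑ wᵢ⁴`;
with the stabilizer orders `16, 6, 6, 6, 2, 2, 1` the `∑ uᵢ² Aᵢᵢ` terms cancel.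
-/

open Matrix

/-- All vectors obtained from `w` by permuting coordinates (by an arbitrary permutation)
and arbitrary sign changes. -/
noncomputable def signedPerms (w : Fin 4 → ℝ) : Finset (Fin 4 → ℝ) :=
  Finset.image
    (fun x : Equiv.Perm (Fin 4) × (Fin 4 → Bool) =>
      fun i => (if x.2 i then (1 : ℝ) else -1) * w (x.1 i))
    Finset.univ

/-- All vectors obtained from `w` by an even permutation of coordinates and arbitrary
sign changes. -/
noncomputable def evenSignedPerms (w : Fin 4 → ℝ) : Finset (Fin 4 → ℝ) :=
  Finset.image
    (fun x : Equiv.Perm (Fin 4) × (Fin 4 → Bool) =>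
      fun i => (if x.2 i then (1 : ℝ) else -1) * w (x.1 i))
    ((Finset.univ.filter fun σ : Equiv.Perm (Fin 4) => Equiv.Perm.sign σ = 1) ×ˢ Finset.univ)

open Finset
open scoped goldenRatio

section OrbitSum

variable {G X : Type*} [Group G] [MulAction G X] [DecidableEq X] {S : Finset G}

lemma card_filter_smul_eq_of_mem (hmul : ∀ a ∈ S, ∀ b ∈ S, a * b ∈ S)
    (hinv : ∀ a ∈ S, a⁻¹ ∈ S) (w : X) {g : G} (hg : g ∈ S) :
    #{x ∈ S | x • w = g • w} = #{x ∈ S | x • w = w} := by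
  refine card_nbij' (g⁻¹ * ·) (g * ·) ?_ ?_ ?_ ?_
  · intro x hx
    simp only [coe_filter, Set.mem_ofPred_eq] at hx ⊢
    exact ⟨hmul _ (hinv _ hg) _ hx.1, by rw [mul_smul, hx.2, inv_smul_smul]⟩
  · intro x hx
    simp only [coe_filter, Set.mem_ofPred_eq] at hx ⊢
    exact ⟨hmul _ hg _ hx.1, by rw [mul_smul, hx.2]⟩
  · intro x _
    simp
  · intro x _
    simp

lemma sum_smul_eq_card_stabilizer_nsmul {M : Type*} [AddCommMonoid M]
    (hmul : ∀ a ∈ S, ∀ b ∈ S, a * b ∈ S) (hinv : ∀ a ∈ S, a⁻¹ ∈ S) (w : X) (f : X → M) :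
    ∑ x ∈ S, f (x • w) = #{x ∈ S | x • w = w} • ∑ η ∈ S.image (· • w), f η := by
  rw [sum_comp, smul_sum]
  refine sum_congr rfl fun η hη => ?_
  obtain ⟨g, hg, rfl⟩ := mem_image.1 hη
  rw [card_filter_smul_eq_of_mem hmul hinv w hg]

lemma sum_image_smul_eq_div {K : Type*} [Field K] [CharZero K]
    (hmul : ∀ a ∈ S, ∀ b ∈ S, a * b ∈ S) (hinv : ∀ a ∈ S, a⁻¹ ∈ S) (w : X) (f : X → K) :
    ∑ η ∈ S.image (· • w), f η = (∑ x ∈ S, f (x • w)) / #{x ∈ S | x • w = w} := by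
  rcases S.eq_empty_or_nonempty with rfl | ⟨g, hg⟩
  · simp
  have hone : (1 : G) ∈ S := inv_mul_cancel g ▸ hmul _ (hinv _ hg) _ hg
  have hstab : (#{x ∈ S | x • w = w} : K) ≠ 0 :=
    Nat.cast_ne_zero.2 (card_ne_zero.2 ⟨1, mem_filter.2 ⟨hone, one_smul G w⟩⟩)
  rw [sum_smul_eq_card_stabilizer_nsmul hmul hinv, nsmul_eq_mul, mul_div_cancel_left₀ _ hstab]

end OrbitSum

section PermAverage

variable {ι R : Type*} [Fintype ι] [DecidableEq ι] [CommRing R] {P : Finset (Equiv.Perm ι)}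
  {m : ℕ}

lemma sum_perm_apply (hP : ∀ i a, #{σ ∈ P | σ i = a} = m) (q : ι → R) (i : ι) :
    ∑ σ ∈ P, q (σ i) = m * ∑ a, q a := by
  rw [← sum_fiberwise' P (fun σ => σ i), mul_sum]
  exact sum_congr rfl fun a _ => by rw [sum_const, hP, nsmul_eq_mul]

lemma sum_perm_apply_mul_apply
    (hP : ∀ i k a b, i ≠ k → a ≠ b → #{σ ∈ P | σ i = a ∧ σ k = b} = m)
    (q : ι → R) {i k : ι} (hik : i ≠ k) :
    ∑ σ ∈ P, q (σ i) * q (σ k) = m * ((∑ a, q a) ^ 2 - ∑ a, q a ^ 2) := by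
  have hfiber : ∀ p : ι × ι, #{σ ∈ P | (σ i, σ k) = p} = if p.1 = p.2 then 0 else m := by
    rintro ⟨a, b⟩
    split_ifs with hab
    · simp only at hab
      subst hab
      simp only [Prod.mk.injEq, card_eq_zero, filter_eq_empty_iff]
      exact fun σ _ h => hik (σ.injective (h.1.trans h.2.symm))
    · simpa only [Prod.mk.injEq] using hP i k a b hik hab
  rw [← sum_fiberwise' P (fun σ => (σ i, σ k)) (fun p => q p.1 * q p.2)]
  simp only [sum_const, hfiber, ite_smul, zero_smul, nsmul_eq_mul, Fintype.sum_prod_type]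
  rw [sq, sum_mul_sum, mul_sub, mul_sum, mul_sum, ← sum_sub_distrib]
  refine sum_congr rfl fun a _ => ?_
  rw [sum_ite, sum_const_zero, zero_add]
  simp only [← ne_eq, filter_ne]
  rw [sum_erase_eq_sub (mem_univ a), mul_sum]
  ring

end PermAverage

def evenPerms (ι : Type*) [Fintype ι] [DecidableEq ι] : Finset (Equiv.Perm ι) :=
  univ.filter fun σ => Equiv.Perm.sign σ = 1

section EvenPerms

variable {ι : Type*} [Fintype ι] [DecidableEq ι] {σ τ : Equiv.Perm ι}

lemma mul_mem_evenPerms (hσ : σ ∈ evenPerms ι) (hτ : τ ∈ evenPerms ι) :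
    σ * τ ∈ evenPerms ι := by
  simp only [evenPerms, mem_filter, mem_univ, true_and, Equiv.Perm.sign_mul] at hσ hτ ⊢
  rw [hσ, hτ, one_mul]

lemma inv_mem_evenPerms (hσ : σ ∈ evenPerms ι) : σ⁻¹ ∈ evenPerms ι := by
  simpa only [evenPerms, mem_filter, mem_univ, true_and, Equiv.Perm.sign_inv] using hσ

end EvenPerms

/-- A pair `(σ, ε)`, where `ε i = true` stands for the sign `+1`; it acts on vectors by
`(x • w) i = ±w (σ i)`. -/
def SignedPerm (ι : Type*) : Type _ := Equiv.Perm ι × (ι → Bool)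

namespace SignedPerm

variable {ι : Type*}

def mk (σ : Equiv.Perm ι) (ε : ι → Bool) : SignedPerm ι := (σ, ε)

-- Chosen so that `(x * y) • w = x • y • w` for the action below.
instance : Mul (SignedPerm ι) := ⟨fun x y => (y.1 * x.1, fun i => x.2 i == y.2 (x.1 i))⟩

instance : One (SignedPerm ι) := ⟨(1, fun _ => true)⟩

instance : Inv (SignedPerm ι) := ⟨fun x => (x.1⁻¹, fun i => x.2 (x.1⁻¹ i))⟩

instance : Group (SignedPerm ι) := Group.ofLeftAxioms
  (fun x y z => Prod.ext (mul_assoc z.1 y.1 x.1) (funext fun i => by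
    change ((x.2 i == y.2 (x.1 i)) == z.2 (y.1 (x.1 i))) =
      (x.2 i == (y.2 (x.1 i) == z.2 (y.1 (x.1 i))))
    cases x.2 i <;> cases y.2 (x.1 i) <;> cases z.2 (y.1 (x.1 i)) <;> rfl))
  (fun x => Prod.ext (mul_one x.1) (funext fun i => by
    change (true == x.2 i) = x.2 i
    simp))
  (fun x => Prod.ext (mul_inv_cancel x.1) (funext fun i => by
    change (x.2 (x.1⁻¹ i) == x.2 (x.1⁻¹ i)) = true
    simp))

variable {R : Type*} [Ring R]

instance : SMul (SignedPerm ι) (ι → R) :=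
  ⟨fun x w i => (if x.2 i then 1 else -1) * w (x.1 i)⟩

lemma smul_apply (x : SignedPerm ι) (w : ι → R) (i : ι) :
    (x • w) i = (if x.2 i then 1 else -1) * w (x.1 i) := rfl

lemma mk_smul_apply (σ : Equiv.Perm ι) (ε : ι → Bool) (w : ι → R) (i : ι) :
    (mk σ ε • w) i = (if ε i then 1 else -1) * w (σ i) := rfl

instance : MulAction (SignedPerm ι) (ι → R) where
  one_smul w := funext fun i => one_mul _
  mul_smul x y w := funext fun i => by
    change (if (x.2 i == y.2 (x.1 i)) then (1 : R) else -1) * w (y.1 (x.1 i)) =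
      (if x.2 i then (1 : R) else -1) * ((if y.2 (x.1 i) then (1 : R) else -1) * w (y.1 (x.1 i)))
    cases x.2 i <;> cases y.2 (x.1 i) <;> simp

lemma smul_comp_eq_self_iff {m : ℕ} {f : Fin (m + 1) → ℝ} (hf : StrictMono f) (hf0 : f 0 = 0)
    (k : ι → Fin (m + 1)) (x : SignedPerm ι) :
    x • (f ∘ k) = f ∘ k ↔ x • (fun i => ((k i : ℕ) : ℤ)) = fun i => ((k i : ℕ) : ℤ) := by
  simp only [funext_iff, smul_apply, Function.comp_apply]
  refine forall_congr' fun i => ?_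
  cases x.2 i
  · have hnonneg : ∀ a, 0 ≤ f a := fun a => hf0 ▸ hf.monotone (Fin.zero_le a)
    have hzero : ∀ a, f a = 0 ↔ a = 0 := fun a => by rw [← hf0, hf.injective.eq_iff]
    trans k (x.1 i) = 0 ∧ k i = 0
    · simp only [Bool.false_eq_true, if_false, ← hzero]
      constructor
      · intro h
        constructor <;> linarith [hnonneg (k (x.1 i)), hnonneg (k i)]
      · rintro ⟨h1, h2⟩
        rw [h1, h2, mul_zero]
    · simp only [Bool.false_eq_true, if_false, Fin.ext_iff, Fin.val_zero]
      omega
  · simp only [if_true, one_mul, hf.injective.eq_iff, Nat.cast_inj, Fin.val_inj]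

/-- The stabilizer of a real vector only depends on which of its entries coincide and which
vanish, so it can be computed on an integer vector with the same pattern. -/
lemma card_stabilizer_eq_of_strictMono [Fintype ι] {S : Finset (SignedPerm ι)} {w : ι → ℝ}
    {m : ℕ} {f : Fin (m + 1) → ℝ} (hf : StrictMono f) (hf0 : f 0 = 0) (k : ι → Fin (m + 1))
    (hw : w = f ∘ k) :
    #{x ∈ S | x • w = w} =
      #{x ∈ S | x • (fun i => ((k i : ℕ) : ℤ)) = fun i => ((k i : ℕ) : ℤ)} := by
  subst hw
  exact congrArg card (filter_congr fun x _ => smul_comp_eq_self_iff hf hf0 k x)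

lemma sum_pow_smul [Fintype ι] {R : Type*} [CommRing R] {n : ℕ} (hn : Even n)
    (x : SignedPerm ι) (w : ι → R) :
    ∑ i, (x • w) i ^ n = ∑ i, w i ^ n := by
  have hsign : ∀ b : Bool, (if b then (1 : R) else -1) ^ n = 1 := fun b => by
    cases b
    · exact hn.neg_one_pow
    · exact one_pow n
  simp only [smul_apply, mul_pow, hsign, one_mul]
  exact Equiv.sum_comp x.1 (fun i => w i ^ n)

lemma disjoint_image_smul_of_sum_pow_ne [Fintype ι] [DecidableEq ι]
    {S S' : Finset (SignedPerm ι)} {w w' : ι → ℝ} {n : ℕ}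
    (hn : Even n) (h : ∑ i, w i ^ n ≠ ∑ i, w' i ^ n) :
    Disjoint (S.image (· • w)) (S'.image (· • w')) := by
  refine disjoint_left.2 fun η hη hη' => h ?_
  obtain ⟨x, -, rfl⟩ := mem_image.1 hη
  obtain ⟨y, -, hy⟩ := mem_image.1 hη'
  rw [← sum_pow_smul hn x, ← hy, sum_pow_smul hn y]

variable [Fintype ι] [DecidableEq ι]

instance : Fintype (SignedPerm ι) := inferInstanceAs (Fintype (Equiv.Perm ι × (ι → Bool)))

instance : DecidableEq (SignedPerm ι) :=
  inferInstanceAs (DecidableEq (Equiv.Perm ι × (ι → Bool)))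

def withPermIn (P : Finset (Equiv.Perm ι)) : Finset (SignedPerm ι) := P ×ˢ univ

variable {P : Finset (Equiv.Perm ι)}

lemma mem_withPermIn {x : SignedPerm ι} : x ∈ withPermIn P ↔ x.1 ∈ P :=
  mem_product.trans (and_iff_left (mem_univ _))

lemma sum_withPermIn {M : Type*} [AddCommMonoid M] (f : SignedPerm ι → M) :
    ∑ x ∈ withPermIn P, f x = ∑ σ ∈ P, ∑ ε, f (mk σ ε) :=
  sum_product P univ f

lemma mul_mem_withPermIn (hP : ∀ σ ∈ P, ∀ τ ∈ P, σ * τ ∈ P) :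
    ∀ x ∈ withPermIn P, ∀ y ∈ withPermIn P, x * y ∈ withPermIn P := by
  simp only [mem_withPermIn]
  exact fun x hx y hy => hP _ hy _ hx

lemma inv_mem_withPermIn (hP : ∀ σ ∈ P, σ⁻¹ ∈ P) : ∀ x ∈ withPermIn P, x⁻¹ ∈ withPermIn P := by
  simp only [mem_withPermIn]
  exact fun x hx => hP _ hx

end SignedPerm

lemma sum_fun_fin_four_bool {M : Type*} [AddCommMonoid M] (F : (Fin 4 → Bool) → M) :
    ∑ ε, F ε = ∑ a, ∑ b, ∑ c, ∑ d, F ![a, b, c, d] := by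
  have hbij : Function.Bijective
      (fun x : Bool × Bool × Bool × Bool => (![x.1, x.2.1, x.2.2.1, x.2.2.2] : Fin 4 → Bool)) := by
    decide
  simp only [← Fintype.sum_bijective _ hbij _ F (fun _ => rfl), Fintype.sum_prod_type]

namespace SignedPerm

lemma sum_dotProduct_mk_smul_sq (σ : Equiv.Perm (Fin 4)) (w u : Fin 4 → ℝ) :
    ∑ ε, (u ⬝ᵥ mk σ ε • w) ^ 2 = 16 * ∑ i, u i ^ 2 * w (σ i) ^ 2 := by
  simp only [sum_fun_fin_four_bool, dotProduct, mk_smul_apply, Fin.sum_univ_four,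
    Fintype.sum_bool]
  simp only [Fin.isValue, cons_val_zero, cons_val_one, Matrix.cons_val, ↓reduceIte,
    Bool.false_eq_true, one_mul, neg_mul, mul_neg]
  ring

lemma sum_dotProduct_mk_smul_sq_mul (σ : Equiv.Perm (Fin 4)) (w u : Fin 4 → ℝ)
    (A : Matrix (Fin 4) (Fin 4) ℝ) :
    ∑ ε, (u ⬝ᵥ mk σ ε • w) ^ 2 * (A *ᵥ mk σ ε • w ⬝ᵥ mk σ ε • w)
      = 16 * (∑ i, ∑ k, (u i ^ 2 * A k k + u i * u k * (A i k + A k i)) *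
            (w (σ i) ^ 2 * w (σ k) ^ 2) - 2 * ∑ i, u i ^ 2 * A i i * w (σ i) ^ 4) := by
  simp only [sum_fun_fin_four_bool, dotProduct, mulVec, mk_smul_apply, Fin.sum_univ_four,
    Fintype.sum_bool]
  simp only [Fin.isValue, cons_val_zero, cons_val_one, Matrix.cons_val, ↓reduceIte,
    Bool.false_eq_true, one_mul, neg_mul, mul_neg]
  ring

variable {P : Finset (Equiv.Perm (Fin 4))} {m₁ m₂ : ℕ}

lemma sum_dotProduct_smul_sq (hP : ∀ i a, #{σ ∈ P | σ i = a} = m₁) (w u : Fin 4 → ℝ) :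
    ∑ x ∈ withPermIn P, (u ⬝ᵥ x • w) ^ 2 = 16 * m₁ * (∑ i, w i ^ 2) * (u ⬝ᵥ u) := by
  simp only [sum_withPermIn, sum_dotProduct_mk_smul_sq, ← mul_sum]
  rw [sum_comm]
  simp only [← mul_sum, sum_perm_apply hP (fun a => w a ^ 2), dotProduct, ← sum_mul, ← sq]
  ring

lemma sum_dotProduct_smul_sq_mul (hP₁ : ∀ i a, #{σ ∈ P | σ i = a} = m₁)
    (hP₂ : ∀ i k a b, i ≠ k → a ≠ b → #{σ ∈ P | σ i = a ∧ σ k = b} = m₂)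
    (w u : Fin 4 → ℝ) (A : Matrix (Fin 4) (Fin 4) ℝ) :
    ∑ x ∈ withPermIn P, (u ⬝ᵥ x • w) ^ 2 * (A *ᵥ x • w ⬝ᵥ x • w)
      = 16 * (m₂ * ((∑ i, w i ^ 2) ^ 2 - ∑ i, w i ^ 4) * ((u ⬝ᵥ u) * trace A + 2 * (A *ᵥ u ⬝ᵥ u))
        + (m₁ * ∑ i, w i ^ 4 - 3 * m₂ * ((∑ i, w i ^ 2) ^ 2 - ∑ i, w i ^ 4))
          * ∑ i, u i ^ 2 * A i i) := by
  have hpair : ∀ i k, ∑ σ ∈ P, w (σ i) ^ 2 * w (σ k) ^ 2 = if i = k then m₁ * ∑ a, w a ^ 4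
      else m₂ * ((∑ a, w a ^ 2) ^ 2 - ∑ a, w a ^ 4) := by
    intro i k
    split_ifs with hik
    · simp only [hik, ← pow_add, sum_perm_apply hP₁ (fun a => w a ^ 4)]
    · simp only [sum_perm_apply_mul_apply hP₂ (fun a => w a ^ 2) hik, ← pow_mul]
  have hdiag : ∀ i, ∑ σ ∈ P, w (σ i) ^ 4 = m₁ * ∑ a, w a ^ 4 :=
    sum_perm_apply hP₁ (fun a => w a ^ 4)
  simp only [sum_withPermIn, sum_dotProduct_mk_smul_sq_mul, ← mul_sum, sum_sub_distrib]
  rw [sum_comm (s := P), sum_comm (s := P)]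
  simp_rw [sum_comm (s := P) (t := univ), ← mul_sum, hpair, hdiag]
  simp only [Fin.sum_univ_four, dotProduct, mulVec, trace, Matrix.diag, Fin.reduceEq,
    if_true, if_false]
  ring

end SignedPerm

lemma inv_goldenRatio_eq_sub_one : φ⁻¹ = φ - 1 := by
  rw [Real.inv_goldenRatio, ← Real.one_sub_goldenConj]
  ring

lemma inv_goldenRatio_add_one_eq : (φ + 1)⁻¹ = 2 - φ := by
  rw [← Real.goldenRatio_sq, ← inv_pow, inv_goldenRatio_eq_sub_one]
  linear_combination Real.goldenRatio_sq

lemma sqrt_five_eq_two_mul_goldenRatio_sub_one : √5 = 2 * φ - 1 := by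
  rw [Real.goldenRatio]
  ring

open SignedPerm

local notation "S₄" => (univ : Finset (Equiv.Perm (Fin 4)))
local notation "A₄" => evenPerms (Fin 4)

lemma card_filter_apply_eq_univ : ∀ i a : Fin 4, #{σ ∈ S₄ | σ i = a} = 6 := by
  decide

lemma card_filter_apply_eq_and_apply_eq_univ : ∀ i k a b : Fin 4, i ≠ k → a ≠ b →
    #{σ ∈ S₄ | σ i = a ∧ σ k = b} = 2 := by
  decide

lemma card_filter_apply_eq_evenPerms : ∀ i a : Fin 4, #{σ ∈ A₄ | σ i = a} = 3 := by
  decide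

lemma card_filter_apply_eq_and_apply_eq_evenPerms : ∀ i k a b : Fin 4, i ≠ k → a ≠ b →
    #{σ ∈ A₄ | σ i = a ∧ σ k = b} = 1 := by
  decide

lemma signedPerms_eq (w : Fin 4 → ℝ) : signedPerms w = (withPermIn S₄).image (· • w) := rfl

lemma evenSignedPerms_eq (w : Fin 4 → ℝ) :
    evenSignedPerms w = (withPermIn A₄).image (· • w) := rfl

noncomputable def cell120Vertices : Finset (Fin 4 → ℝ) :=
  signedPerms ![2, 2, 0, 0] ∪ signedPerms ![√5, 1, 1, 1] ∪ signedPerms ![φ, φ, φ, (φ ^ 2)⁻¹]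
    ∪ signedPerms ![φ ^ 2, φ⁻¹, φ⁻¹, φ⁻¹] ∪ evenSignedPerms ![φ ^ 2, (φ ^ 2)⁻¹, 1, 0]
    ∪ evenSignedPerms ![√5, φ⁻¹, φ, 0] ∪ evenSignedPerms ![2, 1, φ, φ⁻¹]

lemma card_stabilizers_cell120 :
    #{x ∈ withPermIn S₄ | x • ![2, 2, 0, 0] = (![2, 2, 0, 0] : Fin 4 → ℝ)} = 16 ∧
    #{x ∈ withPermIn S₄ | x • ![√5, 1, 1, 1] = (![√5, 1, 1, 1] : Fin 4 → ℝ)} = 6 ∧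
    #{x ∈ withPermIn S₄ | x • ![φ, φ, φ, (φ ^ 2)⁻¹] = (![φ, φ, φ, (φ ^ 2)⁻¹] : Fin 4 → ℝ)} = 6 ∧
    #{x ∈ withPermIn S₄ |
      x • ![φ ^ 2, φ⁻¹, φ⁻¹, φ⁻¹] = (![φ ^ 2, φ⁻¹, φ⁻¹, φ⁻¹] : Fin 4 → ℝ)} = 6 ∧
    #{x ∈ withPermIn A₄ |
      x • ![φ ^ 2, (φ ^ 2)⁻¹, 1, 0] = (![φ ^ 2, (φ ^ 2)⁻¹, 1, 0] : Fin 4 → ℝ)} = 2 ∧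
    #{x ∈ withPermIn A₄ | x • ![√5, φ⁻¹, φ, 0] = (![√5, φ⁻¹, φ, 0] : Fin 4 → ℝ)} = 2 ∧
    #{x ∈ withPermIn A₄ | x • ![2, 1, φ, φ⁻¹] = (![2, 1, φ, φ⁻¹] : Fin 4 → ℝ)} = 1 := by
  rw [card_stabilizer_eq_of_strictMono (f := ![0, 2]) ?_ rfl ![1, 1, 0, 0]
      (by ext i; fin_cases i <;> rfl),
    card_stabilizer_eq_of_strictMono (f := ![0, 1, √5]) ?_ rfl ![2, 1, 1, 1]
      (by ext i; fin_cases i <;> rfl),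
    card_stabilizer_eq_of_strictMono (f := ![0, (φ ^ 2)⁻¹, φ]) ?_ rfl ![2, 2, 2, 1]
      (by ext i; fin_cases i <;> rfl),
    card_stabilizer_eq_of_strictMono (f := ![0, φ⁻¹, φ ^ 2]) ?_ rfl ![2, 1, 1, 1]
      (by ext i; fin_cases i <;> rfl),
    card_stabilizer_eq_of_strictMono (f := ![0, (φ ^ 2)⁻¹, 1, φ ^ 2]) ?_ rfl ![3, 1, 2, 0]
      (by ext i; fin_cases i <;> rfl),
    card_stabilizer_eq_of_strictMono (f := ![0, φ⁻¹, φ, √5]) ?_ rfl ![3, 1, 2, 0]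
      (by ext i; fin_cases i <;> rfl),
    card_stabilizer_eq_of_strictMono (f := ![0, φ⁻¹, 1, φ, 2]) ?_ rfl ![4, 2, 3, 1]
      (by ext i; fin_cases i <;> rfl)]
  · decide
  all_goals
    simp only [strictMono_vecCons, Matrix.cons_val_zero, Real.goldenRatio_sq,
      inv_goldenRatio_eq_sub_one, inv_goldenRatio_add_one_eq,
      sqrt_five_eq_two_mul_goldenRatio_sub_one]
    and_intros
    all_goals first
      | exact strictMono_vecEmpty
      | linarith [Real.one_lt_goldenRatio, Real.goldenRatio_lt_two]

lemma sum_cell120Vertices (f : (Fin 4 → ℝ) → ℝ) :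
    ∑ η ∈ cell120Vertices, f η =
      (∑ x ∈ withPermIn S₄, f (x • ![2, 2, 0, 0])) / 16
      + (∑ x ∈ withPermIn S₄, f (x • ![√5, 1, 1, 1])) / 6
      + (∑ x ∈ withPermIn S₄, f (x • ![φ, φ, φ, (φ ^ 2)⁻¹])) / 6
      + (∑ x ∈ withPermIn S₄, f (x • ![φ ^ 2, φ⁻¹, φ⁻¹, φ⁻¹])) / 6
      + (∑ x ∈ withPermIn A₄, f (x • ![φ ^ 2, (φ ^ 2)⁻¹, 1, 0])) / 2
      + (∑ x ∈ withPermIn A₄, f (x • ![√5, φ⁻¹, φ, 0])) / 2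
      + ∑ x ∈ withPermIn A₄, f (x • ![2, 1, φ, φ⁻¹]) := by
  obtain ⟨h₁, h₂, h₃, h₄, h₅, h₆, h₇⟩ := card_stabilizers_cell120
  have hS₄ := fun w : Fin 4 → ℝ => sum_image_smul_eq_div
    (mul_mem_withPermIn (P := S₄) fun _ _ _ _ => mem_univ _)
    (inv_mem_withPermIn fun _ _ => mem_univ _) w f
  have hA₄ := fun w : Fin 4 → ℝ => sum_image_smul_eq_div
    (mul_mem_withPermIn (P := A₄) fun _ hσ _ hτ => mul_mem_evenPerms hσ hτ)
    (inv_mem_withPermIn fun _ hσ => inv_mem_evenPerms hσ) w f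
  rw [cell120Vertices, sum_union, sum_union, sum_union, sum_union, sum_union, sum_union]
  · simp only [signedPerms_eq, evenSignedPerms_eq, hS₄, hA₄, h₁, h₂, h₃, h₄, h₅, h₆, h₇,
      Nat.cast_ofNat, Nat.cast_one, div_one]
  -- The eighth power sums `512, 628, 1636 - 924φ, 712 + 924φ, 2208, 672, 304` of the seven
  -- base vectors are distinct, so the orbits are pairwise disjoint.
  all_goals
    simp only [signedPerms_eq, evenSignedPerms_eq, disjoint_union_left]
    and_intros
    all_goals
      refine disjoint_image_smul_of_sum_pow_ne (n := 8) ⟨4, rfl⟩ ?_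
      simp only [Fin.sum_univ_four, Matrix.cons_val_zero, Matrix.cons_val_one,
        Matrix.cons_val_two, Matrix.cons_val_three, Matrix.head_cons, Matrix.tail_cons,
        Real.goldenRatio_sq, inv_goldenRatio_eq_sub_one, inv_goldenRatio_add_one_eq,
        sqrt_five_eq_two_mul_goldenRatio_sub_one]
      have := Real.goldenRatio_sq
      grind

theorem cell120_four_averaging_general (c : ℝ) (hc : c = (1 + Real.sqrt 5) / 2)
    (J : Finset (Fin 4 → ℝ))
    (hJ : J = signedPerms ![2, 2, 0, 0]
              ∪ signedPerms ![Real.sqrt 5, 1, 1, 1]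
              ∪ signedPerms ![c, c, c, (c ^ 2)⁻¹]
              ∪ signedPerms ![c ^ 2, c⁻¹, c⁻¹, c⁻¹]
              ∪ evenSignedPerms ![c ^ 2, (c ^ 2)⁻¹, 1, 0]
              ∪ evenSignedPerms ![Real.sqrt 5, c⁻¹, c, 0]
              ∪ evenSignedPerms ![2, 1, c, c⁻¹])
    (u : Fin 4 → ℝ)
    (A : Matrix (Fin 4) (Fin 4) ℝ) :
    (∑ η ∈ J, (u ⬝ᵥ η) ^ 2 = 1200 * (u ⬝ᵥ u)) ∧
    (∑ η ∈ J, (u ⬝ᵥ η) ^ 2 * (A.mulVec η ⬝ᵥ η)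
      = 3200 * (A.mulVec u ⬝ᵥ u) + 1600 * Matrix.trace A * (u ⬝ᵥ u)) ∧
    (u ⬝ᵥ u = 1 →
      (∑ η ∈ J, (u ⬝ᵥ η) ^ 2 * (A.mulVec η ⬝ᵥ η)) / (∑ η ∈ J, (u ⬝ᵥ η) ^ 2)
        = (16 / 3) * ((2 / 4) * (A.mulVec u ⬝ᵥ u) + (1 / 4) * Matrix.trace A)) := by
  obtain rfl : c = φ := hc
  obtain rfl : J = cell120Vertices := hJ
  have hφ := Real.goldenRatio_sq
  have hquad : ∑ η ∈ cell120Vertices, (u ⬝ᵥ η) ^ 2 = 1200 * (u ⬝ᵥ u) := by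
    simp only [sum_cell120Vertices, sum_dotProduct_smul_sq card_filter_apply_eq_univ,
      sum_dotProduct_smul_sq card_filter_apply_eq_evenPerms, Fin.sum_univ_four,
      Matrix.cons_val_zero, Matrix.cons_val_one, Matrix.cons_val_two, Matrix.cons_val_three,
      Matrix.head_cons, Matrix.tail_cons, Real.goldenRatio_sq, inv_goldenRatio_eq_sub_one,
      inv_goldenRatio_add_one_eq, sqrt_five_eq_two_mul_goldenRatio_sub_one]
    grind
  have hquart : ∑ η ∈ cell120Vertices, (u ⬝ᵥ η) ^ 2 * (A *ᵥ η ⬝ᵥ η)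
      = 3200 * (A *ᵥ u ⬝ᵥ u) + 1600 * trace A * (u ⬝ᵥ u) := by
    simp only [sum_cell120Vertices,
      sum_dotProduct_smul_sq_mul card_filter_apply_eq_univ card_filter_apply_eq_and_apply_eq_univ,
      sum_dotProduct_smul_sq_mul card_filter_apply_eq_evenPerms
        card_filter_apply_eq_and_apply_eq_evenPerms, Fin.sum_univ_four,
      Matrix.cons_val_zero, Matrix.cons_val_one, Matrix.cons_val_two, Matrix.cons_val_three,
      Matrix.head_cons, Matrix.tail_cons, Real.goldenRatio_sq, inv_goldenRatio_eq_sub_one,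
      inv_goldenRatio_add_one_eq, sqrt_five_eq_two_mul_goldenRatio_sub_one]
    grind
  exact ⟨hquad, hquart, fun hu => by rw [hquad, hquart, hu]; ring⟩

/-- The 600 vertices of the 120-cell form a 4-averaging set in `ℝ⁴`:
`∑ ⟨u,η⟩² = 1200|u|²`, `∑ ⟨u,η⟩²⟨Aη,η⟩ = 3200⟨Au,u⟩ + 1600 tr(A)|u|²`, and for unit `u`
the ratio equals `(16/3)((2/4)⟨Au,u⟩ + (1/4)tr A)`. Here `c` is the golden ratio; the
vertex set consists of all permutations (with signs) of `(2,2,0,0)`, `(√5,1,1,1)`,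
`(c,c,c,c⁻²)` and `(c²,c⁻¹,c⁻¹,c⁻¹)`, together with all even permutations (with signs) of
`(c²,c⁻²,1,0)`, `(√5,c⁻¹,c,0)` and `(2,1,c,c⁻¹)`. -/
theorem cell120_four_averaging (c : ℝ) (hc : c = (1 + Real.sqrt 5) / 2)
    (J : Finset (Fin 4 → ℝ))
    (hJ : J = signedPerms ![2, 2, 0, 0]
              ∪ signedPerms ![Real.sqrt 5, 1, 1, 1]
              ∪ signedPerms ![c, c, c, (c ^ 2)⁻¹]
              ∪ signedPerms ![c ^ 2, c⁻¹, c⁻¹, c⁻¹]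
              ∪ evenSignedPerms ![c ^ 2, (c ^ 2)⁻¹, 1, 0]
              ∪ evenSignedPerms ![Real.sqrt 5, c⁻¹, c, 0]
              ∪ evenSignedPerms ![2, 1, c, c⁻¹])
    (u : Fin 4 → ℝ)
    (A : Matrix (Fin 4) (Fin 4) ℝ) (hA : A.IsSymm) :
    (∑ η ∈ J, (u ⬝ᵥ η) ^ 2 = 1200 * (u ⬝ᵥ u)) ∧
    (∑ η ∈ J, (u ⬝ᵥ η) ^ 2 * (A.mulVec η ⬝ᵥ η)
      = 3200 * (A.mulVec u ⬝ᵥ u) + 1600 * Matrix.trace A * (u ⬝ᵥ u)) ∧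
    (u ⬝ᵥ u = 1 →
      (∑ η ∈ J, (u ⬝ᵥ η) ^ 2 * (A.mulVec η ⬝ᵥ η)) / (∑ η ∈ J, (u ⬝ᵥ η) ^ 2)
        = (16 / 3) * ((2 / 4) * (A.mulVec u ⬝ᵥ u) + (1 / 4) * Matrix.trace A)) :=
  cell120_four_averaging_general c hc J hJ u A
end
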